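/- Let δ, ξ, ω₁, ω₂ > 0 and let Ξ : ℝ² → ℝ be a C¹ map which is constant on the unit circle. Define M(s) = 1 − (1−s)^{1/δ}, W(s,φ) = φ + (ξω₂/δ)ln(1−s), u(s,φ) = M(s)cos W(s,φ), v(s,φ) = M(s)sin W(s,φ), and Υ(s,φ) = Ξ(u(s,φ), v(s,φ)) − (ξω₁/δ)·ln(1−s) for s ∈ [0,1), φ ∈ ℝ. Then ∂Υ/∂φ(s,φ) = −(∂Ξ/∂u)(u,v)·v(s,φ) + (∂Ξ/∂v)(u,v)·u(s,φ), and ∂Υ/∂φ(s,φ) → 0 as s → 1⁻, uniformly in φ ∈ ℝ. -/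

import Mathlib

/-!
Since (u, v) = M(s) • (cos W, sin W) and W is a translate of φ, the φ-derivative of Υ is the
derivative of Ξ at (u, v) along the rotation field (-v, u). This field is tangent to the unit
circle, on which Ξ is constant, so the angular derivative vanishes on the circle. Being continuous,
it is then uniformly small on a thickening of the compact circle, and (u, v) lies within
|M(s) - 1| = (1 - s)^(1/δ) of the circle point (cos W, sin W).
-/

open Real Set Filter Topology Metric

noncomputable def angularDeriv (f : ℝ × ℝ → ℝ) (p : ℝ × ℝ) : ℝ := fderiv ℝ f p (-p.2, p.1)

theorem ContinuousLinearMap.apply_prod_mk_eq (L : ℝ × ℝ →L[ℝ] ℝ) (a b : ℝ) :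
    L (a, b) = a * L (1, 0) + b * L (0, 1) := by
  have hsplit : ((a, b) : ℝ × ℝ) = a • ((1 : ℝ), (0 : ℝ)) + b • ((0 : ℝ), (1 : ℝ)) := by simp
  rw [hsplit, map_add, map_smul, map_smul, smul_eq_mul, smul_eq_mul]

theorem continuous_angularDeriv {f : ℝ × ℝ → ℝ} (hf : ContDiff ℝ 1 f) :
    Continuous (angularDeriv f) :=
  (hf.continuous_fderiv one_ne_zero).clm_apply (by fun_prop)

theorem hasDerivAt_comp_smul_cos_sin {f : ℝ × ℝ → ℝ} {r θ : ℝ}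
    (hf : DifferentiableAt ℝ f (r • (cos θ, sin θ))) :
    HasDerivAt (fun θ => f (r • (cos θ, sin θ))) (angularDeriv f (r • (cos θ, sin θ))) θ := by
  have hcurve : HasDerivAt (fun θ => r • (cos θ, sin θ)) (r • (-sin θ, cos θ)) θ :=
    ((hasDerivAt_cos θ).prodMk (hasDerivAt_sin θ)).const_smul r
  have hrot : angularDeriv f (r • (cos θ, sin θ)) =
      fderiv ℝ f (r • (cos θ, sin θ)) (r • (-sin θ, cos θ)) := by
    simp [angularDeriv]
  rw [hrot]
  exact hf.hasFDerivAt.comp_hasDerivAt θ hcurve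

theorem angularDeriv_cos_sin_eq_zero {f : ℝ × ℝ → ℝ} {c : ℝ} (hf : Differentiable ℝ f)
    (hconst : ∀ p : ℝ × ℝ, p.1 ^ 2 + p.2 ^ 2 = 1 → f p = c) (θ : ℝ) :
    angularDeriv f (cos θ, sin θ) = 0 := by
  have h := hasDerivAt_comp_smul_cos_sin (r := 1) (θ := θ) (hf _)
  simp only [one_smul] at h
  have hc : (fun θ => f (cos θ, sin θ)) = fun _ => c :=
    funext fun θ => hconst _ (cos_sq_add_sin_sq θ)
  rw [hc] at h
  exact h.unique (hasDerivAt_const θ c)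

theorem isCompact_range_cos_sin : IsCompact (range fun θ : ℝ => (cos θ, sin θ)) :=
  Function.Periodic.compact_of_continuous (c := 2 * π)
    (fun θ => by simp only [cos_add_two_pi, sin_add_two_pi]) two_pi_pos.ne' (by fun_prop)

theorem dist_smul_cos_sin_le (r θ : ℝ) : dist (r • (cos θ, sin θ)) (cos θ, sin θ) ≤ |r - 1| := by
  have hnorm : ‖((cos θ, sin θ) : ℝ × ℝ)‖ ≤ 1 :=
    norm_prod_le_iff.2 ⟨abs_cos_le_one θ, abs_sin_le_one θ⟩
  calc dist (r • (cos θ, sin θ)) (cos θ, sin θ) = |r - 1| * ‖((cos θ, sin θ) : ℝ × ℝ)‖ := by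
        rw [dist_eq_norm, ← Real.norm_eq_abs, ← norm_smul, sub_smul, one_smul]
    _ ≤ |r - 1| := mul_le_of_le_one_right (abs_nonneg _) hnorm

theorem tendstoUniformly_comp_smul_cos_sin {ι : Type*} {g : ℝ × ℝ → ℝ} (hg : Continuous g)
    (hg0 : ∀ θ, g (cos θ, sin θ) = 0) {l : Filter ι} {R : ι → ℝ} (hR : Tendsto R l (𝓝 1)) :
    TendstoUniformly (fun i θ => g (R i • (cos θ, sin θ))) 0 l := by
  rw [Metric.tendstoUniformly_iff]
  intro η hη
  have hsub : (range fun θ : ℝ => (cos θ, sin θ)) ⊆ g ⁻¹' ball 0 η := by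
    rintro _ ⟨θ, rfl⟩
    simpa [hg0] using hη
  obtain ⟨ε, hε, hthick⟩ :=
    isCompact_range_cos_sin.exists_thickening_subset_open (isOpen_ball.preimage hg) hsub
  filter_upwards [hR (ball_mem_nhds 1 hε)] with i hi θ
  have hmem : R i • (cos θ, sin θ) ∈ thickening ε (range fun θ : ℝ => (cos θ, sin θ)) :=
    mem_thickening_iff.2 ⟨_, ⟨θ, rfl⟩, (dist_smul_cos_sin_le _ _).trans_lt hi⟩
  simpa [dist_comm] using hthick hmem

theorem tendsto_one_sub_one_sub_rpow {q : ℝ} (hq : 0 < q) :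
    Tendsto (fun s : ℝ => 1 - (1 - s) ^ q) (𝓝 1) (𝓝 1) := by
  have h : Continuous fun s : ℝ => 1 - (1 - s) ^ q :=
    continuous_const.sub ((continuous_const.sub continuous_id).rpow_const fun _ => Or.inr hq.le)
  simpa [zero_rpow hq.ne'] using h.tendsto 1

theorem stmt_10_general (δ ξ ω₁ ω₂ : ℝ) (hδ : 0 < δ)
    (Ξ : ℝ × ℝ → ℝ) (hΞ : ContDiff ℝ 1 Ξ)
    (c : ℝ) (hconst : ∀ p : ℝ × ℝ, p.1 ^ 2 + p.2 ^ 2 = 1 → Ξ p = c)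
    (M : ℝ → ℝ) (W : ℝ → ℝ → ℝ) (u v : ℝ → ℝ → ℝ) (Υ : ℝ → ℝ → ℝ)
    (hM : ∀ s : ℝ, M s = 1 - (1 - s) ^ (1 / δ))
    (hW : ∀ s φ : ℝ, W s φ = φ + (ξ * ω₂ / δ) * Real.log (1 - s))
    (hu : ∀ s φ : ℝ, u s φ = M s * Real.cos (W s φ))
    (hv : ∀ s φ : ℝ, v s φ = M s * Real.sin (W s φ))
    (hΥ : ∀ s φ : ℝ, Υ s φ =
      Ξ (u s φ, v s φ) - (ξ * ω₁ / δ) * Real.log (1 - s)) :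
    (∀ s ∈ Set.Ico (0 : ℝ) 1, ∀ φ : ℝ,
      deriv (fun φ' => Υ s φ') φ =
        -(fderiv ℝ Ξ (u s φ, v s φ) (1, 0)) * v s φ
          + (fderiv ℝ Ξ (u s φ, v s φ) (0, 1)) * u s φ) ∧
    (∀ η > (0 : ℝ), ∃ s₀ ∈ Set.Ioo (0 : ℝ) 1, ∀ s ∈ Set.Ioo s₀ 1, ∀ φ : ℝ,
      |deriv (fun φ' => Υ s φ') φ| < η) := by
  have hΞd : Differentiable ℝ Ξ := hΞ.differentiable one_ne_zero
  have huv : ∀ s φ, (u s φ, v s φ) = M s • (cos (W s φ), sin (W s φ)) := fun s φ => by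
    simp [hu, hv]
  have hderiv : ∀ s φ, deriv (fun φ' => Υ s φ') φ = angularDeriv Ξ (u s φ, v s φ) := by
    intro s φ
    have hΥs : (fun φ' => Υ s φ') = fun φ' =>
        Ξ (M s • (cos (φ' + ξ * ω₂ / δ * log (1 - s)), sin (φ' + ξ * ω₂ / δ * log (1 - s))))
          - ξ * ω₁ / δ * log (1 - s) := by
      funext φ'
      rw [hΥ, huv, hW]
    rw [hΥs, huv, hW]
    exact (((hasDerivAt_comp_smul_cos_sin (hΞd _)).comp_add_const φ _).sub_const _).deriv
  refine ⟨fun s _ φ => ?_, fun η hη => ?_⟩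
  · rw [hderiv, angularDeriv, ContinuousLinearMap.apply_prod_mk_eq]
    ring
  · have hM1 : Tendsto M (𝓝[<] 1) (𝓝 1) := by
      rw [funext hM]
      exact (tendsto_one_sub_one_sub_rpow (one_div_pos.2 hδ)).mono_left nhdsWithin_le_nhds
    have hsmall := Metric.tendstoUniformly_iff.1 (tendstoUniformly_comp_smul_cos_sin
      (continuous_angularDeriv hΞ) (angularDeriv_cos_sin_eq_zero hΞd hconst) hM1) η hη
    obtain ⟨s₀, hs₀, hIoo⟩ :=
      (mem_nhdsLT_iff_exists_mem_Ico_Ioo_subset (by norm_num : (1 / 2 : ℝ) < 1)).1 hsmall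
    refine ⟨s₀, ⟨by linarith [hs₀.1], hs₀.2⟩, fun s hs φ => ?_⟩
    simpa [hderiv, huv, dist_zero_left] using hIoo hs (W s φ)

/-- Claim 2 of Proposition 5.5: the partial derivative `∂Υ/∂φ` equals
`−(∂Ξ/∂u)(u,v)·v + (∂Ξ/∂v)(u,v)·u`, and it tends to `0` as `s → 1⁻`,
uniformly in `φ ∈ ℝ`. -/
theorem stmt_10 (δ ξ ω₁ ω₂ : ℝ) (hδ : 0 < δ) (hξ : 0 < ξ) (hω₁ : 0 < ω₁) (hω₂ : 0 < ω₂)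
    (Ξ : ℝ × ℝ → ℝ) (hΞ : ContDiff ℝ 1 Ξ)
    (c : ℝ) (hconst : ∀ p : ℝ × ℝ, p.1 ^ 2 + p.2 ^ 2 = 1 → Ξ p = c)
    (M : ℝ → ℝ) (W : ℝ → ℝ → ℝ) (u v : ℝ → ℝ → ℝ) (Υ : ℝ → ℝ → ℝ)
    (hM : ∀ s : ℝ, M s = 1 - (1 - s) ^ (1 / δ))
    (hW : ∀ s φ : ℝ, W s φ = φ + (ξ * ω₂ / δ) * Real.log (1 - s))
    (hu : ∀ s φ : ℝ, u s φ = M s * Real.cos (W s φ))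
    (hv : ∀ s φ : ℝ, v s φ = M s * Real.sin (W s φ))
    (hΥ : ∀ s φ : ℝ, Υ s φ =
      Ξ (u s φ, v s φ) - (ξ * ω₁ / δ) * Real.log (1 - s)) :
    (∀ s ∈ Set.Ico (0 : ℝ) 1, ∀ φ : ℝ,
      deriv (fun φ' => Υ s φ') φ =
        -(fderiv ℝ Ξ (u s φ, v s φ) (1, 0)) * v s φ
          + (fderiv ℝ Ξ (u s φ, v s φ) (0, 1)) * u s φ) ∧
    (∀ η > (0 : ℝ), ∃ s₀ ∈ Set.Ioo (0 : ℝ) 1, ∀ s ∈ Set.Ioo s₀ 1, ∀ φ : ℝ,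
      |deriv (fun φ' => Υ s φ') φ| < η) :=
  stmt_10_general δ ξ ω₁ ω₂ hδ Ξ hΞ c hconst M W u v Υ hM hW hu hv hΥ
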